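/- arXiv:2001.00696 — 2 statements merged into one kernel-verified Lean document; each statement's English description precedes it below -/
import Mathlib

section
/- Every strongly rotund Banach space satisfies the property (HS). -/
open Metric Filter Topology NormedSpace

noncomputable section

/-- The face `S(X, f, 0) = {y ∈ B_X : f(y) = 1}` determined by a functional `f`. -/
def face (X : Type*) [NormedAddCommGroup X] [NormedSpace ℝ X] (f : X →L[ℝ] ℝ) : Set X :=
  {y | ‖y‖ ≤ 1 ∧ f y = 1}

/-- Property (HS). -/
def HSProp (X : Type*) [NormedAddCommGroup X] [NormedSpace ℝ X] : Prop :=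
  ∀ f : X →L[ℝ] ℝ, ‖f‖ = 1 → (face X f).Nonempty →
    ∀ xs : ℕ → X, (∀ n, ‖xs n‖ ≤ 1) →
      Tendsto (fun n => f (xs n)) atTop (𝓝 1) →
      Tendsto (fun n => infDist (xs n) (face X f)) atTop (𝓝 0)

/-- Property (HLUR). -/
def HLUR (X : Type*) [NormedAddCommGroup X] [NormedSpace ℝ X] : Prop :=
  ∀ x : X, ‖x‖ = 1 → ∀ xs : ℕ → X, (∀ n, ‖xs n‖ = 1) →
    Tendsto (fun n => ‖xs n + x‖) atTop (𝓝 2) →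
    ∀ f : X →L[ℝ] ℝ, ‖f‖ = 1 → f x = 1 →
      Tendsto (fun n => infDist (xs n) (face X f)) atTop (𝓝 0)

/-- Local uniform rotundity. -/
def LUR (X : Type*) [NormedAddCommGroup X] [NormedSpace ℝ X] : Prop :=
  ∀ x : X, ‖x‖ = 1 → ∀ xs : ℕ → X, (∀ n, ‖xs n‖ = 1) →
    Tendsto (fun n => ‖xs n + x‖) atTop (𝓝 2) → Tendsto xs atTop (𝓝 x)

/-- Compact local uniform rotundity. -/
def CLUR (X : Type*) [NormedAddCommGroup X] [NormedSpace ℝ X] : Prop :=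
  ∀ x : X, ‖x‖ = 1 → ∀ xs : ℕ → X, (∀ n, ‖xs n‖ = 1) →
    Tendsto (fun n => ‖xs n + x‖) atTop (𝓝 2) →
    ∃ φ : ℕ → ℕ, StrictMono φ ∧ ∃ z : X, Tendsto (xs ∘ φ) atTop (𝓝 z)

/-- Local U-convexity. -/
def LocallyUConvex (X : Type*) [NormedAddCommGroup X] [NormedSpace ℝ X] : Prop :=
  ∀ x : X, ‖x‖ = 1 → ∀ xs : ℕ → X, (∀ n, ‖xs n‖ = 1) →
    Tendsto (fun n => ‖xs n + x‖) atTop (𝓝 2) →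
    ∃ f : X →L[ℝ] ℝ, ‖f‖ = 1 ∧ f x = 1 ∧ Tendsto (fun n => f (xs n)) atTop (𝓝 1)

/-- Strong local U-convexity. -/
def StronglyLocallyUConvex (X : Type*) [NormedAddCommGroup X] [NormedSpace ℝ X] : Prop :=
  ∀ x : X, ‖x‖ = 1 → ∀ xs : ℕ → X, (∀ n, ‖xs n‖ = 1) →
    Tendsto (fun n => ‖xs n + x‖) atTop (𝓝 2) →
    ∀ f : X →L[ℝ] ℝ, ‖f‖ = 1 → f x = 1 → Tendsto (fun n => f (xs n)) atTop (𝓝 1)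

/-- Rotundity (strict convexity): every face has at most one element. -/
def Rotund (X : Type*) [NormedAddCommGroup X] [NormedSpace ℝ X] : Prop :=
  ∀ f : X →L[ℝ] ℝ, ‖f‖ = 1 → (face X f).Subsingleton

/-- Near strict convexity: every face is norm-compact. -/
def NSC (X : Type*) [NormedAddCommGroup X] [NormedSpace ℝ X] : Prop :=
  ∀ f : X →L[ℝ] ℝ, ‖f‖ = 1 → IsCompact (face X f)

/-- Kadets-Klee property. -/
def KadetsKlee (X : Type*) [NormedAddCommGroup X] [NormedSpace ℝ X] : Prop :=
  ∀ (xs : ℕ → X) (x : X),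
    (∀ f : X →L[ℝ] ℝ, Tendsto (fun n => f (xs n)) atTop (𝓝 (f x))) →
    Tendsto (fun n => ‖xs n‖) atTop (𝓝 ‖x‖) → Tendsto xs atTop (𝓝 x)

/-- Alternatively convex or smooth. -/
def ACS (X : Type*) [NormedAddCommGroup X] [NormedSpace ℝ X] : Prop :=
  ∀ x y : X, ‖x‖ = 1 → ‖y‖ = 1 → ∀ f : X →L[ℝ] ℝ, ‖f‖ = 1 →
    ‖x + y‖ = 2 → f x = 1 → f y = 1

/-- Smoothness: each unit vector has a unique norming functional. -/
def SmoothSpace (X : Type*) [NormedAddCommGroup X] [NormedSpace ℝ X] : Prop :=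
  ∀ x : X, ‖x‖ = 1 → ∃! f : X →L[ℝ] ℝ, ‖f‖ = 1 ∧ f x = 1

/-- Reflexivity of a normed space. -/
def ReflexiveSpace (X : Type*) [NormedAddCommGroup X] [NormedSpace ℝ X] : Prop :=
  Function.Surjective (inclusionInDoubleDual ℝ X)

/-- Strong rotundity: reflexive, rotund and Kadets-Klee. -/
def StronglyRotund (X : Type*) [NormedAddCommGroup X] [NormedSpace ℝ X] : Prop :=
  ReflexiveSpace X ∧ Rotund X ∧ KadetsKlee X


/-!
Let `x` be the point of the face of `f`, which is unique by rotundity. By Banach–Alaoglu, the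
images of `xₙ` in the bidual have weak-star cluster points in the closed unit ball; by reflexivity
each of them comes from a point `z` of the unit ball, and `f z = 1` since `f (xₙ) → 1`, so `z = x`.
Hence `xₙ` converges weakly to `x`. Moreover `f (xₙ) ≤ ‖xₙ‖ ≤ 1` gives `‖xₙ‖ → 1 = ‖x‖`, so
`xₙ → x` in norm by the Kadets–Klee property, which is `d(xₙ, face X f) = ‖xₙ - x‖ → 0`.
-/

section

variable {X : Type*} [NormedAddCommGroup X] [NormedSpace ℝ X]

lemma norm_eq_one_of_mem_face {f : X →L[ℝ] ℝ} (hf : ‖f‖ ≤ 1) {x : X} (hx : x ∈ face X f) :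
    ‖x‖ = 1 := by
  refine le_antisymm hx.1 ?_
  calc (1 : ℝ) = f x := hx.2.symm
    _ ≤ ‖f‖ * ‖x‖ := (le_abs_self _).trans (f.le_opNorm x)
    _ ≤ ‖x‖ := mul_le_of_le_one_left (norm_nonneg x) hf

lemma Rotund.face_eq_singleton (hX : Rotund X) {f : X →L[ℝ] ℝ} (hf : ‖f‖ = 1) {x : X}
    (hx : x ∈ face X f) : face X f = {x} :=
  Set.eq_singleton_iff_unique_mem.mpr ⟨hx, fun _ hy => hX f hf hy hx⟩

lemma tendsto_norm_one_of_tendsto_apply_one {ι : Type*} {l : Filter ι} {f : X →L[ℝ] ℝ}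
    (hf : ‖f‖ ≤ 1) {xs : ι → X} (hxs : ∀ i, ‖xs i‖ ≤ 1)
    (hlim : Tendsto (fun i => f (xs i)) l (𝓝 1)) : Tendsto (fun i => ‖xs i‖) l (𝓝 1) := by
  refine tendsto_of_tendsto_of_tendsto_of_le_of_le hlim tendsto_const_nhds (fun i => ?_) hxs
  calc f (xs i) ≤ ‖f‖ * ‖xs i‖ := (le_abs_self _).trans (f.le_opNorm _)
    _ ≤ ‖xs i‖ := mul_le_of_le_one_left (norm_nonneg _) hf

def toWeakBidual (x : X) : WeakDual ℝ (StrongDual ℝ X) :=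
  StrongDual.toWeakDual (inclusionInDoubleDual ℝ X x)

lemma toWeakBidual_mem_closedBall {x : X} {r : ℝ} (hx : ‖x‖ ≤ r) :
    toWeakBidual x ∈ WeakDual.toStrongDual ⁻¹' closedBall 0 r :=
  (dist_zero_right (inclusionInDoubleDual ℝ X x)).trans_le
    ((double_dual_bound ℝ X x).trans hx)

lemma ReflexiveSpace.exists_toWeakBidual_eq (hX : ReflexiveSpace X) {r : ℝ}
    {y : WeakDual ℝ (StrongDual ℝ X)} (hy : y ∈ WeakDual.toStrongDual ⁻¹' closedBall 0 r) :
    ∃ z : X, ‖z‖ ≤ r ∧ toWeakBidual z = y := by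
  obtain ⟨z, hz⟩ := hX (WeakDual.toStrongDual y)
  refine ⟨z, ?_, congrArg StrongDual.toWeakDual hz⟩
  calc ‖z‖ = ‖inclusionInDoubleDual ℝ X z‖ := ((inclusionInDoubleDualLi ℝ).norm_map z).symm
    _ = dist (WeakDual.toStrongDual y) 0 := by rw [hz, dist_zero_right (WeakDual.toStrongDual y)]
    _ ≤ r := hy

lemma ReflexiveSpace.tendsto_apply_of_face_eq_singleton (hX : ReflexiveSpace X) {ι : Type*}
    {l : Filter ι} {f : X →L[ℝ] ℝ} {x : X} (hface : face X f = {x}) {xs : ι → X}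
    (hxs : ∀ i, ‖xs i‖ ≤ 1) (hlim : Tendsto (fun i => f (xs i)) l (𝓝 1))
    (g : X →L[ℝ] ℝ) : Tendsto (fun i => g (xs i)) l (𝓝 (g x)) := by
  have hweak : Tendsto (toWeakBidual ∘ xs) l (𝓝 (toWeakBidual x)) := by
    refine (WeakDual.isCompact_closedBall (𝕜 := ℝ) 0 1).tendsto_nhds_of_unique_mapClusterPt
      (Eventually.of_forall fun i => toWeakBidual_mem_closedBall (hxs i)) fun y hy hcluster => ?_
    obtain ⟨z, hz, rfl⟩ := hX.exists_toWeakBidual_eq hy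
    have hfz : f z = 1 := eq_of_nhds_neBot <|
      (hcluster.tendsto_comp ((WeakDual.eval_continuous f).tendsto _)).clusterPt.mono hlim
    have hzx : z ∈ face X f := ⟨hz, hfz⟩
    rw [hface, Set.mem_singleton_iff] at hzx
    rw [hzx]
  exact ((WeakDual.eval_continuous g).tendsto _).comp hweak

end

theorem stronglyRotund_hs_general (X : Type*) [NormedAddCommGroup X] [NormedSpace ℝ X]
    (hX : StronglyRotund X) : HSProp X := by
  obtain ⟨hrefl, hrot, hkk⟩ := hX
  intro f hf ⟨x, hx⟩ xs hxs hlim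
  have hface := hrot.face_eq_singleton hf hx
  have hnorm : Tendsto (fun n => ‖xs n‖) atTop (𝓝 ‖x‖) := by
    rw [norm_eq_one_of_mem_face hf.le hx]
    exact tendsto_norm_one_of_tendsto_apply_one hf.le hxs hlim
  have hconv : Tendsto xs atTop (𝓝 x) :=
    hkk xs x (hrefl.tendsto_apply_of_face_eq_singleton hface hxs hlim) hnorm
  simpa only [hface, infDist_singleton] using tendsto_iff_dist_tendsto_zero.mp hconv

theorem stronglyRotund_hs (X : Type*) [NormedAddCommGroup X] [NormedSpace ℝ X]
    [CompleteSpace X] (hX : StronglyRotund X) : HSProp X :=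
  stronglyRotund_hs_general X hX
end
end

section
/- Let X be a finite dimensional Banach space. Then X is HLUR if and only if X is an ACS space (alternatively convex or smooth). -/
/-!
Constant sequences show that HLUR implies ACS in any normed space. Conversely, in finite
dimensions the unit sphere is compact, so `d(x_n, face f) → 0` follows once every cluster point
`z` of `(x_n)` lies in the face of `f`; such a `z` is a unit vector with `‖z + x‖ = 2`, and ACS
then gives `f z = 1`.
-/

open Metric Filter Topology NormedSpace

noncomputable section

lemma isClosed_face (X : Type*) [NormedAddCommGroup X] [NormedSpace ℝ X] (f : X →L[ℝ] ℝ) :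
    IsClosed (face X f) :=
  (isClosed_le continuous_norm continuous_const).inter (isClosed_eq f.continuous continuous_const)

lemma MapClusterPt.eq_of_tendsto {ι α : Type*} [TopologicalSpace α] [T2Space α] {F : Filter ι}
    {u : ι → α} {z a : α} (hz : MapClusterPt z F u) (hu : Tendsto u F (𝓝 a)) : z = a :=
  eq_of_nhds_neBot (hz.clusterPt.mono hu)

lemma tendsto_infDist_zero_of_mapClusterPt_mem {α : Type*} [PseudoMetricSpace α] {K S : Set α}
    {u : ℕ → α} (hK : IsCompact K) (hu : ∀ n, u n ∈ K)
    (hS : ∀ z, MapClusterPt z atTop u → z ∈ S) :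
    Tendsto (fun n => infDist (u n) S) atTop (𝓝 0) := by
  refine tendsto_of_subseq_tendsto fun ns hns => ?_
  obtain ⟨z, -, φ, hφ, hz⟩ := hK.tendsto_subseq fun n => hu (ns n)
  have hzS : z ∈ S := hS z <| .of_comp (hns.comp hφ.tendsto_atTop) hz.mapClusterPt
  refine ⟨φ, ?_⟩
  rw [← infDist_zero_of_mem hzS]
  exact ((continuous_infDist_pt S).tendsto z).comp hz

theorem ACS.of_HLUR {X : Type*} [NormedAddCommGroup X] [NormedSpace ℝ X] (h : HLUR X) :
    ACS X := by
  intro x y hx hy f hf hxy hfx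
  have hdist : infDist y (face X f) = 0 :=
    tendsto_nhds_unique tendsto_const_nhds <|
      h x hx (fun _ => y) (fun _ => hy) (by simp [add_comm, hxy]) f hf hfx
  have hne : (face X f).Nonempty := ⟨x, hx.le, hfx⟩
  exact (((isClosed_face X f).mem_iff_infDist_zero hne).mpr hdist).2

theorem HLUR.of_ACS {X : Type*} [NormedAddCommGroup X] [NormedSpace ℝ X] [ProperSpace X]
    (h : ACS X) : HLUR X := by
  intro x hx xs hxs hlim f hf hfx
  have hsphere : ∀ n, xs n ∈ sphere (0 : X) 1 := fun n => by simpa using hxs n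
  refine tendsto_infDist_zero_of_mapClusterPt_mem (isCompact_sphere 0 1) hsphere fun z hz => ?_
  have hz1 : ‖z‖ = 1 := by
    simpa using isClosed_sphere.mem_of_mapClusterPt hz (Eventually.of_forall hsphere)
  have hzx : ‖x + z‖ = 2 := by
    rw [add_comm]
    exact (hz.continuousAt_comp (f := fun y => ‖y + x‖) (by fun_prop)).eq_of_tendsto hlim
  exact ⟨hz1.le, h x z hx hz1 f hf hzx hfx⟩

theorem hlur_iff_acs_of_finiteDimensional (X : Type*) [NormedAddCommGroup X]
    [NormedSpace ℝ X] [FiniteDimensional ℝ X] :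
    HLUR X ↔ ACS X :=
  ⟨ACS.of_HLUR, HLUR.of_ACS⟩
end
end
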